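/- arXiv:2402.09568 — 5 statements merged into one kernel-verified Lean document; each statement's English description precedes it below -/
import Mathlib

section
/- Fix an integer k ≥ 3, n = 2k, z(u) ≡ u (mod k), and (d_k; c_k) as specified. For every γ in the simple fiber F̃(d_k; c_k), the set {k+1, k+2, …, 2k} is independent in γ; that is, γ_{uv} = 0 for all k+1 ≤ u < v ≤ 2k. -/
open Finset

/-- The set `P` of 2-element subsets of `{1,…,n}`, encoded as ordered pairs. -/
abbrev Edge (n : ℕ) : Type := {p : Fin n × Fin n // p.1 < p.2}

/-- Entry `γ_{uv}` of a vector `γ ∈ ℤ^P` at the unordered pair `{u,v}` (0 when `u = v`). -/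
def ent {n : ℕ} (γ : Edge n → ℤ) (u v : Fin n) : ℤ :=
  if h : u < v then γ ⟨(u, v), h⟩ else if h : v < u then γ ⟨(v, u), h⟩ else 0

/-- Entry at `{u,v}` of a vector in `ℕ^P`. -/
def entN {n : ℕ} (x : Edge n → ℕ) (u v : Fin n) : ℕ :=
  if h : u < v then x ⟨(u, v), h⟩ else if h : v < u then x ⟨(v, u), h⟩ else 0

/-- Degree sequence: `d(γ)_u = ∑_{v ≠ u} γ_{uv}`. -/
def degSeq {n : ℕ} (γ : Edge n → ℤ) (u : Fin n) : ℤ := ∑ v, ent γ u v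

/-- Color sequence: `c(γ)_{ij} = ∑ γ_{uv}` over `{u,v} ∈ P` with `{z u, z v} = {i,j}`. -/
def colorSeq {n k : ℕ} (z : Fin n → Fin k) (γ : Edge n → ℤ) (i j : Fin k) : ℤ :=
  ∑ e : Edge n,
    if (z e.1.1 = i ∧ z e.1.2 = j) ∨ (z e.1.1 = j ∧ z e.1.2 = i) then γ e else 0

/-- `γ ∈ ker_ℤ DC_{n,z}`: both the degree sequence and the color sequence vanish. -/
def inKer {n k : ℕ} (z : Fin n → Fin k) (γ : Edge n → ℤ) : Prop :=
  (∀ u, degSeq γ u = 0) ∧ ∀ i j, colorSeq z γ i j = 0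

/-- The 1-norm `‖γ‖₁ = ∑_{e ∈ P} |γ_e|`. -/
def norm1 {n : ℕ} (γ : Edge n → ℤ) : ℤ := ∑ e, |γ e|

/-- The set of moves `M_{n,z} = {γ ∈ ker_ℤ DC_{n,z} : ‖γ‖₁ = 4}`. -/
def MSet {n k : ℕ} (z : Fin n → Fin k) : Set (Edge n → ℤ) :=
  {γ | inKer z γ ∧ norm1 γ = 4}

/-- Degree sequence of a vector in `ℕ^P`. -/
def degSeqN {n : ℕ} (x : Edge n → ℕ) (u : Fin n) : ℕ := ∑ v, entN x u v

/-- Color sequence of a vector in `ℕ^P`. -/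
def colorSeqN {n k : ℕ} (z : Fin n → Fin k) (x : Edge n → ℕ) (i j : Fin k) : ℕ :=
  ∑ e : Edge n,
    if (z e.1.1 = i ∧ z e.1.2 = j) ∨ (z e.1.1 = j ∧ z e.1.2 = i) then x e else 0

/-- The fiber `F(b) = {x ∈ ℕ^P : DC_{n,z} x = b}`, where `b = (d; c)`. -/
def Fiber {n k : ℕ} (z : Fin n → Fin k) (d : Fin n → ℤ) (c : Fin k → Fin k → ℤ) :
    Set (Edge n → ℕ) :=
  {x | (∀ u, (degSeqN x u : ℤ) = d u) ∧ ∀ i j, (colorSeqN z x i j : ℤ) = c i j}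

/-- The simple fiber `F̃(b) = F(b) ∩ {0,1}^P`. -/
def SimpleFiber {n k : ℕ} (z : Fin n → Fin k) (d : Fin n → ℤ) (c : Fin k → Fin k → ℤ) :
    Set (Edge n → ℕ) :=
  {x | x ∈ Fiber z d c ∧ ∀ e, x e ≤ 1}

/-- The difference `x − x' ∈ ℤ^P` of two vectors in `ℕ^P`. -/
def diff {n : ℕ} (x x' : Edge n → ℕ) : Edge n → ℤ := fun e => (x e : ℤ) - (x' e : ℤ)

/-! Call `i ↦ i` and `i ↦ i + k` the low and high vertex of colour `i`; the colour classes form a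
`k`-cycle, consecutive classes are joined by exactly two edges, and no other edges exist. If the
high vertex of `b` has no neighbour in class `b + 1`, the two edges between classes `b` and `b + 1`
both leave the low vertex of `b`, so one of them uses up the single edge of the high vertex of
`b + 1`: the property propagates around the cycle. A high–high edge between `a` and `a + 1` would
start this propagation at `a + 1` and end by forbidding itself. -/


section Colouring

variable {n k : ℕ}

lemma entN_comm (x : Edge n → ℕ) (u v : Fin n) : entN x u v = entN x v u := by
  unfold entN
  rcases lt_trichotomy u v with h | rfl | h
  · rw [dif_pos h, dif_neg h.asymm, dif_pos h]
  · rfl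
  · rw [dif_neg h.asymm, dif_pos h, dif_pos h]

lemma entN_self (x : Edge n → ℕ) (u : Fin n) : entN x u u = 0 := by
  simp [entN]

lemma entN_le_one {x : Edge n → ℕ} (hx : ∀ e, x e ≤ 1) (u v : Fin n) : entN x u v ≤ 1 := by
  unfold entN
  split_ifs <;> simp [hx]

lemma sum_sum_eq_sum_edge {M : Type*} [AddCommMonoid M] (f : Fin n → Fin n → M)
    (hf : ∀ u, f u u = 0) :
    ∑ u, ∑ v, f u v = ∑ e : Edge n, (f e.1.1 e.1.2 + f e.1.2 e.1.1) := by
  have hsplit : ∀ u v, f u v = (if u < v then f u v else 0) + if v < u then f u v else 0 := by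
    intro u v
    rcases lt_trichotomy u v with h | rfl | h
    · simp [h, h.asymm]
    · simp [hf]
    · simp [h, h.asymm]
  have upper : ∀ g : Fin n → Fin n → M,
      ∑ u, ∑ v, (if u < v then g u v else 0) = ∑ e : Edge n, g e.1.1 e.1.2 := by
    intro g
    rw [← sum_subtype (univ.filter fun p : Fin n × Fin n => p.1 < p.2) (by simp)
      (fun p => g p.1 p.2), sum_filter]
    exact (Fintype.sum_prod_type' fun u v => if u < v then g u v else 0).symm
  rw [sum_congr rfl fun u _ => sum_congr rfl fun v _ => hsplit u v]
  simp only [sum_add_distrib]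
  rw [sum_comm (f := fun u v => if v < u then f u v else 0), upper, upper,
    ← sum_add_distrib]

lemma colorSeqN_eq_sum_entN (z : Fin n → Fin k) (x : Edge n → ℕ) {i j : Fin k} (hij : i ≠ j) :
    colorSeqN z x i j = ∑ u ∈ univ.filter (z · = i), ∑ v ∈ univ.filter (z · = j), entN x u v := by
  set g : Fin n → Fin n → ℕ := fun u v => if z u = i ∧ z v = j then entN x u v else 0
  have hg : ∀ u, g u u = 0 := by simp [g, entN_self]
  calc colorSeqN z x i j = ∑ e : Edge n, (g e.1.1 e.1.2 + g e.1.2 e.1.1) := by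
        refine sum_congr rfl fun e _ => ?_
        have he : entN x e.1.1 e.1.2 = x e := dif_pos e.2
        simp only [g, entN_comm x e.1.2, he]
        split_ifs <;> simp_all
    _ = ∑ u, ∑ v, g u v := (sum_sum_eq_sum_edge g hg).symm
    _ = _ := by simp [g, sum_filter, ite_and]

lemma entN_eq_zero_of_colorSeqN_eq_zero (z : Fin n → Fin k) (x : Edge n → ℕ) {u v : Fin n}
    (h : colorSeqN z x (z u) (z v) = 0) : entN x u v = 0 := by
  have edge_zero := sum_eq_zero_iff.mp h
  unfold entN
  split_ifs with huv hvu
  · simpa using edge_zero ⟨(u, v), huv⟩ (mem_univ _)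
  · simpa using edge_zero ⟨(v, u), hvu⟩ (mem_univ _)
  · rfl

lemma add_add_entN_le_degSeqN (x : Edge n → ℕ) (u : Fin n) {v w y : Fin n}
    (hvw : v ≠ w) (hvy : v ≠ y) (hwy : w ≠ y) :
    entN x u v + entN x u w + entN x u y ≤ degSeqN x u := by
  have h := sum_le_sum_of_subset (f := entN x u) (subset_univ {v, w, y})
  rwa [sum_insert (by simp [hvw, hvy]), sum_pair hwy, ← add_assoc] at h

end Colouring

open Fin.NatCast in
lemma Fin.cyclic_induction {k : ℕ} [NeZero k] {P : Fin k → Prop} (step : ∀ b, P b → P (b + 1))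
    {b : Fin k} (hb : P b) (j : Fin k) : P j := by
  have reach : ∀ m : ℕ, P (b + (m : Fin k)) := by
    intro m
    induction m with
    | zero => simpa using hb
    | succ m ih => simpa [add_assoc] using step _ ih
  simpa using reach (j - b).val

lemma Fin.add_one_ne_self {k : ℕ} [NeZero k] (hk : 2 ≤ k) (b : Fin k) : b + 1 ≠ b := by
  rw [Ne, add_eq_left, Fin.ext_iff, Fin.val_one', Fin.val_zero, Nat.mod_eq_of_lt hk]
  exact one_ne_zero

lemma Fin.add_one_add_one_ne_self {k : ℕ} [NeZero k] (hk : 3 ≤ k) (b : Fin k) : b + 1 + 1 ≠ b := by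
  rw [Ne, add_assoc, add_eq_left, Fin.ext_iff, Fin.val_add, Fin.val_one', Fin.val_zero,
    Nat.mod_eq_of_lt (by omega : 1 < k), Nat.mod_eq_of_lt (by omega : 1 + 1 < k)]
  exact two_ne_zero

namespace CycleFiber

variable {k : ℕ}

def low (i : Fin k) : Fin (2 * k) := ⟨i, by have := i.isLt; omega⟩

def high (i : Fin k) : Fin (2 * k) := ⟨i + k, by have := i.isLt; omega⟩

lemma low_ne_high (i j : Fin k) : low i ≠ high j := by
  simp [low, high, Fin.ext_iff]; omega

lemma low_injective : Function.Injective (low (k := k)) := fun i j h => by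
  simpa [low, Fin.ext_iff] using h

lemma high_injective : Function.Injective (high (k := k)) := fun i j h => by
  simpa [high, Fin.ext_iff] using h

variable [NeZero k]

def residue (u : Fin (2 * k)) : Fin k := Fin.ofNat k u

lemma residue_val (u : Fin (2 * k)) : (residue u).val = if u.val < k then u.val else u.val - k := by
  have := u.isLt
  simp only [residue, Fin.val_ofNat]
  split_ifs with hu
  · exact Nat.mod_eq_of_lt hu
  · rw [Nat.mod_eq_sub_mod (by omega), Nat.mod_eq_of_lt (by omega)]

lemma residue_high (i : Fin k) : residue (high i) = i := by
  ext; simp [residue_val, high]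

lemma high_residue {u : Fin (2 * k)} (hu : k ≤ u.val) : high (residue u) = u := by
  ext; simp only [high, residue_val]; split_ifs <;> omega

lemma filter_residue_eq (i : Fin k) : univ.filter (residue · = i) = {low i, high i} := by
  ext u
  simp only [mem_filter, mem_univ, true_and, mem_insert, mem_singleton, Fin.ext_iff, residue_val,
    low, high]
  have := u.isLt
  have := i.isLt
  split_ifs <;> omega

lemma colorSeqN_residue (x : Edge (2 * k) → ℕ) {i j : Fin k} (hij : i ≠ j) :
    colorSeqN residue x i j = entN x (low i) (low j) + entN x (low i) (high j)
      + entN x (high i) (low j) + entN x (high i) (high j) := by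
  rw [colorSeqN_eq_sum_entN _ _ hij, filter_residue_eq, filter_residue_eq,
    sum_pair (low_ne_high _ _), sum_pair (low_ne_high _ _), sum_pair (low_ne_high _ _)]
  ring


def cycleDegrees (k : ℕ) (u : Fin (2 * k)) : ℤ := if u.val < k then 3 else 1

def cycleColours (k : ℕ) (i j : Fin k) : ℤ :=
  if (i.val + 1) % k = j.val ∨ (j.val + 1) % k = i.val then 2 else 0

lemma val_add_one_mod_eq_iff (hk : 2 ≤ k) (i j : Fin k) : (i.val + 1) % k = j.val ↔ i + 1 = j := by
  rw [Fin.ext_iff, Fin.val_add, Fin.val_one', Nat.mod_eq_of_lt hk]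

def NoForwardEdge (x : Edge (2 * k) → ℕ) (b : Fin k) : Prop :=
  entN x (high b) (low (b + 1)) = 0 ∧ entN x (high b) (high (b + 1)) = 0

variable {x : Edge (2 * k) → ℕ} (hx : x ∈ SimpleFiber residue (cycleDegrees k) (cycleColours k))
include hx

lemma degSeqN_high (i : Fin k) : degSeqN x (high i) = 1 := by
  have h := hx.1.1 (high i)
  rw [cycleDegrees, if_neg (by simp [high])] at h
  exact_mod_cast h

lemma colorSeqN_add_one (hk : 2 ≤ k) (i : Fin k) : colorSeqN residue x i (i + 1) = 2 := by
  have h := hx.1.2 i (i + 1)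
  rw [cycleColours, if_pos (Or.inl ((val_add_one_mod_eq_iff hk _ _).2 rfl))] at h
  exact_mod_cast h

lemma colorSeqN_eq_zero (hk : 2 ≤ k) {i j : Fin k} (hij : ¬(i + 1 = j ∨ j + 1 = i)) :
    colorSeqN residue x i j = 0 := by
  have h := hx.1.2 i j
  rw [cycleColours, if_neg (by rwa [val_add_one_mod_eq_iff hk, val_add_one_mod_eq_iff hk])] at h
  exact_mod_cast h

lemma NoForwardEdge.add_one (hk : 3 ≤ k) {b : Fin k} (h : NoForwardEdge x b) :
    NoForwardEdge x (b + 1) := by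
  obtain ⟨hHL, hHH⟩ := h
  have hcol := colorSeqN_residue x (Fin.add_one_ne_self (by omega) b).symm
  rw [colorSeqN_add_one hx (by omega), hHL, hHH] at hcol
  have hLL := entN_le_one hx.2 (low b) (low (b + 1))
  have hLH := entN_le_one hx.2 (low b) (high (b + 1))
  have hdeg := add_add_entN_le_degSeqN x (high (b + 1)) (v := low b) (w := low (b + 1 + 1))
    (y := high (b + 1 + 1)) (low_injective.ne (Fin.add_one_add_one_ne_self hk b).symm)
    (low_ne_high _ _) (low_ne_high _ _)
  rw [degSeqN_high hx, entN_comm x _ (low b)] at hdeg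
  constructor <;> omega

lemma entN_high_high_add_one (hk : 3 ≤ k) (a : Fin k) : entN x (high a) (high (a + 1)) = 0 := by
  by_contra hne
  have hHH := entN_le_one hx.2 (high a) (high (a + 1))
  have hdeg := add_add_entN_le_degSeqN x (high (a + 1)) (v := high a) (w := low (a + 1 + 1))
    (y := high (a + 1 + 1)) (low_ne_high _ _).symm
    (high_injective.ne (Fin.add_one_add_one_ne_self hk a).symm) (low_ne_high _ _)
  rw [degSeqN_high hx, entN_comm x _ (high a)] at hdeg
  have h : NoForwardEdge x (a + 1) := ⟨by omega, by omega⟩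
  exact hne (Fin.cyclic_induction (fun _ => NoForwardEdge.add_one hx hk) h a).2

end CycleFiber

open CycleFiber in
/-- Claim 2. For every `γ` in the simple fiber, the set
`{k+1, …, 2k}` is independent: `γ_{uv} = 0` whenever both `u` and `v` lie in it. -/
theorem claim_two (k : ℕ) (hk : 3 ≤ k) (γ : Edge (2 * k) → ℕ)
    (hγ : γ ∈ SimpleFiber
      (fun u : Fin (2 * k) => (⟨u.val % k, Nat.mod_lt _ (by omega)⟩ : Fin k))
      (fun u : Fin (2 * k) => if u.val < k then 3 else 1)
      (fun i j : Fin k =>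
        if (i.val + 1) % k = j.val ∨ (j.val + 1) % k = i.val then 2 else 0)) :
    ∀ u v : Fin (2 * k), k ≤ u.val → k ≤ v.val → entN γ u v = 0 := by
  have : NeZero k := ⟨by omega⟩
  change γ ∈ SimpleFiber residue (cycleDegrees k) (cycleColours k) at hγ
  intro u v hu hv
  rw [← high_residue hu, ← high_residue hv]
  by_cases hfw : residue u + 1 = residue v
  · rw [← hfw]
    exact entN_high_high_add_one hγ hk _
  by_cases hbw : residue v + 1 = residue u
  · rw [← hbw, entN_comm]
    exact entN_high_high_add_one hγ hk _
  refine entN_eq_zero_of_colorSeqN_eq_zero residue γ ?_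
  rw [residue_high, residue_high]
  exact colorSeqN_eq_zero hγ (by omega) (not_or.2 ⟨hfw, hbw⟩)
end

section
/- Let n and k be positive integers and z a k-coloring of {1,…,n}. For every nonzero γ ∈ ker_ℤ DC_{n,z} there exist non-intersecting pairs e, e' ∈ P such that γ_e and γ_{e'} are both positive or both negative (equivalently, the monomial x_e x_{e'} divides x^{γ⁺} or x^{γ⁻}). -/
open Finset

/-- Two chords `{a,b}` and `{a',b'}` (with `a < b`, `a' < b'`) of the circle cross. -/
def Crossing {n : ℕ} (a b a' b' : Fin n) : Prop :=
  (a < a' ∧ a' < b ∧ b < b') ∨ (a' < a ∧ a < b' ∧ b' < b)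

/-- The unordered pairs `{a,b}` and `{a',b'}` are disjoint and do not cross. -/
def NonIntersecting {n : ℕ} (a b a' b' : Fin n) : Prop :=
  a ≠ a' ∧ a ≠ b' ∧ b ≠ a' ∧ b ≠ b' ∧
    ¬ Crossing (min a b) (max a b) (min a' b') (max a' b')

section MyAux

variable {n : ℕ}

lemma my_ent_lt (γ : Edge n → ℤ) {u v : Fin n} (h : u < v) :
    ent γ u v = γ ⟨(u, v), h⟩ := dif_pos h

lemma my_ent_gt (γ : Edge n → ℤ) {u v : Fin n} (h : v < u) :
    ent γ u v = γ ⟨(v, u), h⟩ := by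
  rw [ent, dif_neg (asymm h), dif_pos h]

lemma my_ent_self (γ : Edge n → ℤ) (u : Fin n) : ent γ u u = 0 := by
  rw [ent, dif_neg (lt_irrefl u), dif_neg (lt_irrefl u)]

lemma my_ent_none (γ : Edge n → ℤ) {u v : Fin n} (h1 : ¬ u < v) (h2 : ¬ v < u) :
    ent γ u v = 0 := by rw [ent, dif_neg h1, dif_neg h2]

lemma my_ent_edge (γ : Edge n → ℤ) (e : Edge n) : ent γ e.1.1 e.1.2 = γ e := by
  rw [my_ent_lt γ e.2]

lemma my_ent_edge' (γ : Edge n → ℤ) (e : Edge n) : ent γ e.1.2 e.1.1 = γ e := by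
  rw [my_ent_gt γ e.2]

lemma my_ent_neg (γ : Edge n → ℤ) (u v : Fin n) : ent (-γ) u v = - ent γ u v := by
  rw [ent, ent]; split_ifs <;> simp

lemma my_degSeq_neg (γ : Edge n → ℤ) (u : Fin n) : degSeq (-γ) u = - degSeq γ u := by
  rw [degSeq, degSeq, ← Finset.sum_neg_distrib]
  exact Finset.sum_congr rfl fun v _ => my_ent_neg γ u v

def mySwapEquiv (n : ℕ) : {p : Fin n × Fin n // p.2 < p.1} ≃ Edge n where
  toFun x := ⟨x.1.swap, by simpa using x.2⟩
  invFun e := ⟨e.1.swap, by simpa using e.2⟩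
  left_inv x := Subtype.ext (Prod.swap_swap _)
  right_inv e := Subtype.ext (Prod.swap_swap _)

lemma my_sum_weight (γ : Edge n → ℤ) (w : Fin n → ℤ) :
    ∑ u, w u * degSeq γ u = ∑ e : Edge n, γ e * (w e.1.1 + w e.1.2) := by
  classical
  have h1 : ∑ p : Fin n × Fin n, w p.1 * ent γ p.1 p.2 = ∑ u, w u * degSeq γ u := by
    rw [Fintype.sum_prod_type]
    simp [degSeq, Finset.mul_sum]
  rw [← h1]
  rw [← Finset.sum_filter_add_sum_filter_not (univ : Finset (Fin n × Fin n))
    (fun p => p.1 < p.2) (fun p => w p.1 * ent γ p.1 p.2)]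
  rw [← Finset.sum_filter_add_sum_filter_not
    ((univ : Finset (Fin n × Fin n)).filter (fun p => ¬ p.1 < p.2))
    (fun p => p.2 < p.1) (fun p => w p.1 * ent γ p.1 p.2)]
  have hz : ∑ p ∈ ((univ : Finset (Fin n × Fin n)).filter (fun p => ¬ p.1 < p.2)).filter
      (fun p => ¬ p.2 < p.1), w p.1 * ent γ p.1 p.2 = 0 := by
    apply Finset.sum_eq_zero
    intro p hp
    simp only [Finset.mem_filter] at hp
    rw [my_ent_none γ hp.1.2 hp.2, mul_zero]
  rw [hz, add_zero]
  have hf1 : ((univ : Finset (Fin n × Fin n)).filter (fun p => ¬ p.1 < p.2)).filter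
      (fun p => p.2 < p.1) = (univ : Finset (Fin n × Fin n)).filter (fun p => p.2 < p.1) := by
    ext p
    simp only [Finset.mem_filter, Finset.mem_univ, true_and]
    exact ⟨fun h => h.2, fun h => ⟨asymm h, h⟩⟩
  rw [hf1]
  have hlt : ∑ p ∈ (univ : Finset (Fin n × Fin n)).filter (fun p => p.1 < p.2),
      w p.1 * ent γ p.1 p.2 = ∑ e : Edge n, w e.1.1 * γ e := by
    rw [Finset.sum_subtype (p := fun p : Fin n × Fin n => p.1 < p.2) _ (fun p => by simp)
      (fun p : Fin n × Fin n => w p.1 * ent γ p.1 p.2)]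
    exact Finset.sum_congr rfl fun e _ => by rw [my_ent_edge]
  have hgt : ∑ p ∈ (univ : Finset (Fin n × Fin n)).filter (fun p => p.2 < p.1),
      w p.1 * ent γ p.1 p.2 = ∑ e : Edge n, w e.1.2 * γ e := by
    rw [Finset.sum_subtype (p := fun p : Fin n × Fin n => p.2 < p.1) _ (fun p => by simp)
      (fun p : Fin n × Fin n => w p.1 * ent γ p.1 p.2)]
    refine Fintype.sum_equiv (mySwapEquiv n) _ _ ?_
    intro x
    rw [my_ent_gt γ x.2]
    rfl
  rw [hlt, hgt, ← Finset.sum_add_distrib]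
  exact Finset.sum_congr rfl fun e _ => by ring

end MyAux


section MyAux2

variable {n : ℕ}

lemma my_mk_goal (γ : Edge n → ℤ) (e f : Edge n)
    (hs : (0 < γ e ∧ 0 < γ f) ∨ (γ e < 0 ∧ γ f < 0))
    (hsep : e.1.2 < f.1.1 ∨ f.1.2 < e.1.1 ∨ (f.1.1 < e.1.1 ∧ e.1.2 < f.1.2) ∨
      (e.1.1 < f.1.1 ∧ f.1.2 < e.1.2)) :
    ∃ u v u' v' : Fin n, u ≠ v ∧ u' ≠ v' ∧ NonIntersecting u v u' v' ∧
      ((0 < ent γ u v ∧ 0 < ent γ u' v') ∨ (ent γ u v < 0 ∧ ent γ u' v' < 0)) := by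
  refine ⟨e.1.1, e.1.2, f.1.1, f.1.2, ne_of_lt e.2, ne_of_lt f.2, ?_, ?_⟩
  · have he := e.2
    have hf := f.2
    unfold NonIntersecting Crossing
    rw [min_eq_left (le_of_lt e.2), max_eq_right (le_of_lt e.2),
        min_eq_left (le_of_lt f.2), max_eq_right (le_of_lt f.2)]
    simp only [ne_eq, Fin.ext_iff, Fin.lt_def, not_or, not_and] at he hf hsep ⊢
    omega
  · rw [my_ent_edge, my_ent_edge]; exact hs

lemma my_exists_pos_edge (γ : Edge n → ℤ) {u v : Fin n} (h : 0 < ent γ u v) :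
    ∃ e : Edge n, 0 < γ e := by
  rw [ent] at h
  split_ifs at h with h1 h2
  exacts [⟨_, h⟩, ⟨_, h⟩, absurd h (lt_irrefl 0)]

lemma my_exists_neg_edge (γ : Edge n → ℤ) {u v : Fin n} (h : ent γ u v < 0) :
    ∃ e : Edge n, γ e < 0 := by
  rw [ent] at h
  split_ifs at h with h1 h2
  exacts [⟨_, h⟩, ⟨_, h⟩, absurd h (lt_irrefl 0)]

lemma my_exists_ent_signs (γ : Edge n → ℤ) {u : Fin n} (hd : degSeq γ u = 0)
    {v₀ : Fin n} (h : ent γ u v₀ ≠ 0) :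
    (∃ v, 0 < ent γ u v) ∧ (∃ v, ent γ u v < 0) := by
  rw [degSeq] at hd
  constructor
  · by_contra hc
    push_neg at hc
    have := (Finset.sum_eq_zero_iff_of_nonpos (fun v _ => hc v)).mp hd
    exact h (this v₀ (Finset.mem_univ v₀))
  · by_contra hc
    push_neg at hc
    have := (Finset.sum_eq_zero_iff_of_nonneg (fun v _ => hc v)).mp hd
    exact h (this v₀ (Finset.mem_univ v₀))

lemma my_aux (γ : Edge n → ℤ) (hd : ∀ u, degSeq γ u = 0)
    (Hp : ∀ e f : Edge n, 0 < γ e → 0 < γ f → e.1.2 < f.1.1 → False)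
    (e₀ : Edge n) (h₀ : 0 < γ e₀)
    (hub : ∀ e : Edge n, γ e < 0 → e₀.1.2 < e.1.2) : False := by
  classical
  set r := e₀.1.2 with hr
  set w : Fin n → ℤ := fun u => if u ≤ r then 1 else -1 with hw
  have hsum : ∑ e : Edge n, γ e * (w e.1.1 + w e.1.2) = 0 := by
    rw [← my_sum_weight]
    simp [hd]
  have hnonneg : ∀ e ∈ (Finset.univ : Finset (Edge n)),
      0 ≤ γ e * (w e.1.1 + w e.1.2) := by
    intro e _
    rcases lt_trichotomy (γ e) 0 with h | h | h
    · have hb : ¬ e.1.2 ≤ r := not_le.2 (hub e h)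
      by_cases ha : e.1.1 ≤ r
      · simp only [hw]
        rw [if_pos ha, if_neg hb]
        norm_num
      · simp only [hw]
        rw [if_neg ha, if_neg hb]
        nlinarith
    · simp [h]
    · have ha : e.1.1 ≤ r := by
        by_contra hc
        exact Hp e₀ e h₀ h (not_le.1 hc)
      by_cases hb : e.1.2 ≤ r
      · simp only [hw]
        rw [if_pos ha, if_pos hb]
        nlinarith
      · simp only [hw]
        rw [if_pos ha, if_neg hb]
        norm_num
  have hstrict : ∃ e ∈ (Finset.univ : Finset (Edge n)),
      0 < γ e * (w e.1.1 + w e.1.2) := by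
    refine ⟨e₀, Finset.mem_univ _, ?_⟩
    have ha : e₀.1.1 ≤ r := le_of_lt e₀.2
    simp only [hw]
    rw [if_pos ha, if_pos (le_refl r)]
    nlinarith
  have hpos := Finset.sum_pos' hnonneg hstrict
  rw [hsum] at hpos
  exact lt_irrefl 0 hpos

lemma my_key (γ : Edge n → ℤ) (hd : ∀ u, degSeq γ u = 0)
    (Hpos : ∀ e f : Edge n, 0 < γ e → 0 < γ f →
      (e.1.2 < f.1.1 ∨ f.1.2 < e.1.1 ∨ (f.1.1 < e.1.1 ∧ e.1.2 < f.1.2) ∨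
        (e.1.1 < f.1.1 ∧ f.1.2 < e.1.2)) → False)
    (Hneg : ∀ e f : Edge n, γ e < 0 → γ f < 0 →
      (e.1.2 < f.1.1 ∨ f.1.2 < e.1.1 ∨ (f.1.1 < e.1.1 ∧ e.1.2 < f.1.2) ∨
        (e.1.1 < f.1.1 ∧ f.1.2 < e.1.2)) → False)
    (hne : γ ≠ 0) : False := by
  classical
  obtain ⟨e₁, he₁⟩ : ∃ e, γ e ≠ 0 := by
    by_contra hc
    push_neg at hc
    exact hne (funext fun e => hc e)
  have hent1 : ent γ e₁.1.1 e₁.1.2 ≠ 0 := by rw [my_ent_edge]; exact he₁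
  obtain ⟨⟨vp, hvp⟩, ⟨vn, hvn⟩⟩ := my_exists_ent_signs γ (hd _) hent1
  obtain ⟨ep0, hep0⟩ := my_exists_pos_edge γ hvp
  obtain ⟨en0, hen0⟩ := my_exists_neg_edge γ hvn
  obtain ⟨ep, hepm, hepmin⟩ := Finset.exists_min_image
    (Finset.univ.filter fun e : Edge n => 0 < γ e) (fun e => e.1.2)
    ⟨ep0, by simp [hep0]⟩
  obtain ⟨en, henm, henmin⟩ := Finset.exists_min_image
    (Finset.univ.filter fun e : Edge n => γ e < 0) (fun e => e.1.2)
    ⟨en0, by simp [hen0]⟩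
  have heppos : 0 < γ ep := (Finset.mem_filter.mp hepm).2
  have henneg : γ en < 0 := (Finset.mem_filter.mp henm).2
  have hepmin' : ∀ e : Edge n, 0 < γ e → ep.1.2 ≤ e.1.2 := fun e he =>
    hepmin e (by simp [he])
  have henmin' : ∀ e : Edge n, γ e < 0 → en.1.2 ≤ e.1.2 := fun e he =>
    henmin e (by simp [he])
  rcases lt_trichotomy ep.1.2 en.1.2 with hlt | heq | hgt
  · exact my_aux γ hd (fun e f he hf hs => Hpos e f he hf (Or.inl hs)) ep heppos
      (fun e he => lt_of_lt_of_le hlt (henmin' e he))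
  · -- main case
    obtain ⟨em, hemm, hemmin⟩ := Finset.exists_min_image
      (Finset.univ.filter fun e : Edge n => γ e ≠ 0) (fun e => e.1.1)
      ⟨ep, by simp [ne_of_gt heppos]⟩
    set m := em.1.1 with hm
    have hmub : ∀ e : Edge n, γ e ≠ 0 → m ≤ e.1.1 := fun e he =>
      hemmin e (by simp [he])
    have hzero : ∀ v, v < m → ent γ m v = 0 := by
      intro v hv
      rw [my_ent_gt γ hv]
      by_contra hne'
      exact absurd (hmub ⟨(v, m), hv⟩ hne') (not_le.2 hv)
    have hentm : ent γ m em.1.2 ≠ 0 := by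
      rw [hm, my_ent_edge]
      exact (Finset.mem_filter.mp hemm).2
    obtain ⟨⟨vp2, hvp2⟩, ⟨vn2, hvn2⟩⟩ := my_exists_ent_signs γ (hd m) hentm
    have hmvp : m < vp2 := by
      rcases lt_trichotomy m vp2 with h | h | h
      · exact h
      · rw [← h, my_ent_self] at hvp2; exact absurd hvp2 (lt_irrefl 0)
      · rw [hzero vp2 h] at hvp2; exact absurd hvp2 (lt_irrefl 0)
    have hmvn : m < vn2 := by
      rcases lt_trichotomy m vn2 with h | h | h
      · exact h
      · rw [← h, my_ent_self] at hvn2; exact absurd hvn2 (lt_irrefl 0)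
      · rw [hzero vn2 h] at hvn2; exact absurd hvn2 (lt_irrefl 0)
    have hp1 : 0 < γ (⟨(m, vp2), hmvp⟩ : Edge n) := by
      rw [← my_ent_lt γ hmvp]; exact hvp2
    have hn1 : γ (⟨(m, vn2), hmvn⟩ : Edge n) < 0 := by
      rw [← my_ent_lt γ hmvn]; exact hvn2
    have hrp : ep.1.2 ≤ vp2 := hepmin' _ hp1
    have hrn : en.1.2 ≤ vn2 := henmin' _ hn1
    have hmp : m ≤ ep.1.1 := hmub ep (ne_of_gt heppos)
    have hmn : m ≤ en.1.1 := hmub en (ne_of_lt henneg)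
    have hmR : m < ep.1.2 := lt_of_le_of_lt hmp ep.2
    set E : Edge n := ⟨(m, ep.1.2), hmR⟩ with hE
    have hEpos : 0 < γ E := by
      rcases eq_or_lt_of_le hmp with h | h
      · have hEep : E = ep := Subtype.ext (show (m, ep.1.2) = ep.1 by rw [h])
        rw [hEep]; exact heppos
      · rcases eq_or_lt_of_le hrp with h2 | h2
        · have hEE : E = (⟨(m, vp2), hmvp⟩ : Edge n) := Subtype.ext (show (m, ep.1.2) = (m, vp2) by rw [h2])
          rw [hEE]; exact hp1
        · exact (Hpos ep ⟨(m, vp2), hmvp⟩ heppos hp1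
            (Or.inr (Or.inr (Or.inl ⟨h, h2⟩)))).elim
    have hEneg : γ E < 0 := by
      rcases eq_or_lt_of_le hmn with h | h
      · have hEen : E = en := Subtype.ext (show (m, ep.1.2) = en.1 by rw [heq, h])
        rw [hEen]; exact henneg
      · rcases eq_or_lt_of_le hrn with h2 | h2
        · have hEE : E = (⟨(m, vn2), hmvn⟩ : Edge n) := Subtype.ext (show (m, ep.1.2) = (m, vn2) by rw [heq, h2])
          rw [hEE]; exact hn1
        · exact (Hneg en ⟨(m, vn2), hmvn⟩ henneg hn1
            (Or.inr (Or.inr (Or.inl ⟨h, h2⟩)))).elim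
    exact absurd hEpos (asymm hEneg)
  · refine my_aux (-γ) (fun u => by rw [my_degSeq_neg, hd, neg_zero])
      (fun e f he hf hs => Hneg e f (by simpa using he) (by simpa using hf) (Or.inl hs))
      en (by simpa using henneg)
      (fun e he => lt_of_lt_of_le hgt (hepmin' e (by simpa using he)))

end MyAux2


/-- Every nonzero `γ ∈ ker_ℤ DC_{n,z}` has two non-intersecting pairs on
which it takes values of the same sign. -/
theorem exists_nonintersecting_same_sign (n k : ℕ) (hn : 0 < n) (hk : 0 < k)
    (z : Fin n → Fin k) (γ : Edge n → ℤ) (hγ : inKer z γ) (hne : γ ≠ 0) :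
    ∃ u v u' v' : Fin n, u ≠ v ∧ u' ≠ v' ∧ NonIntersecting u v u' v' ∧
      ((0 < ent γ u v ∧ 0 < ent γ u' v') ∨ (ent γ u v < 0 ∧ ent γ u' v' < 0)) := by
  by_contra hcon
  exact my_key γ hγ.1
    (fun e f he hf hs => hcon (my_mk_goal γ e f (Or.inl ⟨he, hf⟩) hs))
    (fun e f he hf hs => hcon (my_mk_goal γ e f (Or.inr ⟨he, hf⟩) hs))
    hne
end

section
/- Let n and k be positive integers and z a k-coloring of {1,…,n}. For q, q' ∈ {1,…,k} define the k-coloring z_q^{q'} by z_q^{q'}(i) = q if z(i) = q' and z_q^{q'}(i) = z(i) otherwise. Then ker_ℤ DC_{n,z} ⊆ ker_ℤ DC_{n,z_q^{q'}}. -/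
open Finset

/-- Merging the color `q'` into `q` only enlarges the kernel:
`ker_ℤ DC_{n,z} ⊆ ker_ℤ DC_{n,z_q^{q'}}`. -/
theorem ker_subset_ker_of_merge_colors (n k : ℕ) (hn : 0 < n) (hk : 0 < k)
    (z : Fin n → Fin k) (q q' : Fin k) (γ : Edge n → ℤ) (hγ : inKer z γ) :
    inKer (fun i => if z i = q' then q else z i) γ := by
  obtain ⟨hd, hc⟩ := hγ
  set f : Fin k → Fin k := fun a => if a = q' then q else a with hf
  show inKer (fun i => f (z i)) γ
  refine ⟨hd, fun i j => ?_⟩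
  set oc : Fin k → Fin k → ℤ :=
    fun a b => ∑ e : Edge n, if z e.1.1 = a ∧ z e.1.2 = b then γ e else 0 with hoc
  have hsym : ∀ a b : Fin k, a ≠ b → oc a b + oc b a = 0 := by
    intro a b hab
    have h := hc a b
    rw [colorSeq] at h
    rw [hoc]
    simp only
    rw [← Finset.sum_add_distrib]
    have heq : (∑ e : Edge n, ((if z e.1.1 = a ∧ z e.1.2 = b then γ e else 0)
          + (if z e.1.1 = b ∧ z e.1.2 = a then γ e else 0)))
        = ∑ e : Edge n, if z e.1.1 = a ∧ z e.1.2 = b ∨ z e.1.1 = b ∧ z e.1.2 = a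
            then γ e else 0 := by
      apply Finset.sum_congr rfl
      intro e _
      by_cases h1 : z e.1.1 = a ∧ z e.1.2 = b
      · have h2 : ¬ (z e.1.1 = b ∧ z e.1.2 = a) := by
          rintro ⟨hb, -⟩
          exact hab (h1.1 ▸ hb ▸ rfl)
        rw [if_pos (Or.inl h1), if_pos h1, if_neg h2, add_zero]
      · by_cases h2 : z e.1.1 = b ∧ z e.1.2 = a
        · rw [if_pos (Or.inr h2), if_neg h1, if_pos h2, zero_add]
        · rw [if_neg (not_or.mpr ⟨h1, h2⟩), if_neg h1, if_neg h2, add_zero]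
    rw [heq, h]
  have hdiag : ∀ a : Fin k, oc a a = 0 := by
    intro a
    have h := hc a a
    rw [colorSeq] at h
    rw [hoc]
    simp only
    simp only [or_self] at h
    exact h
  set F : Fin k × Fin k → ℤ := fun p =>
    if (f p.1 = i ∧ f p.2 = j) ∨ (f p.1 = j ∧ f p.2 = i) then oc p.1 p.2 else 0 with hF
  have key : colorSeq (fun i => f (z i)) γ i j = ∑ p : Fin k × Fin k, F p := by
    have step : ∀ p : Fin k × Fin k, F p
        = ∑ e : Edge n, if ((f p.1 = i ∧ f p.2 = j) ∨ (f p.1 = j ∧ f p.2 = i))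
            ∧ z e.1.1 = p.1 ∧ z e.1.2 = p.2 then γ e else 0 := by
      intro p
      rw [hF, hoc]
      simp only
      split
      · next h => exact Finset.sum_congr rfl fun e _ => by simp [h]
      · next h => simp [h]
    rw [Finset.sum_congr rfl (fun p _ => step p), Finset.sum_comm]
    rw [colorSeq]
    apply Finset.sum_congr rfl
    intro e _
    rw [Finset.sum_eq_single (z e.1.1, z e.1.2)]
    · simp
    · intro p _ hp
      rw [if_neg]
      rintro ⟨-, h1, h2⟩
      exact hp (Prod.ext h1.symm h2.symm)
    · simp
  have hswap : ∀ p : Fin k × Fin k, F p + F (p.2, p.1) = 0 := by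
    intro p
    obtain ⟨a, b⟩ := p
    rw [hF]
    simp only
    by_cases hpq : a = b
    · subst hpq
      by_cases h : (f a = i ∧ f a = j) ∨ (f a = j ∧ f a = i) <;>
        simp [h, hdiag a]
    · by_cases h : (f a = i ∧ f b = j) ∨ (f a = j ∧ f b = i)
      · have h' : (f b = i ∧ f a = j) ∨ (f b = j ∧ f a = i) := h.symm.imp And.symm And.symm
        rw [if_pos h, if_pos h']
        exact hsym a b hpq
      · have h' : ¬ ((f b = i ∧ f a = j) ∨ (f b = j ∧ f a = i)) := fun hh =>
          h (hh.symm.imp And.symm And.symm)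
        simp [h, h']
  have hre : ∑ p : Fin k × Fin k, F p = ∑ p : Fin k × Fin k, F (p.2, p.1) :=
    Fintype.sum_equiv (Equiv.prodComm (Fin k) (Fin k)) _ _ (fun p => rfl)
  have hzero : (∑ p : Fin k × Fin k, F p) + ∑ p : Fin k × Fin k, F p = 0 := by
    rw [key] at *
    nth_rewrite 2 [hre]
    rw [← Finset.sum_add_distrib]
    exact Finset.sum_eq_zero fun p _ => hswap p
  rw [key]
  linarith
end

section
/- Let n be a positive integer, k ≥ 2, and z a k-coloring of {1,…,n}. Let γ ∈ ker_ℤ DC_{n,z}, let w ∈ {1,…,n}, and let {u,v} ∈ P with σ_w(γ)_{uv} ≠ 0. Then there exist u₀, v₀ ∈ {1,…,n} with z(u₀) = z(u) and z(v₀) = z(v), with u₀ = u whenever u ≠ w and v₀ = v whenever v ≠ w, such that γ_{u₀v₀} ≠ 0 and γ_{u₀v₀} has the same sign as σ_w(γ)_{uv}. -/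
open Finset

/-- Entry at `(u,v)` of the contraction `σ_w(γ)` with respect to `w` and `z`. -/
def contractEnt {n k : ℕ} (z : Fin n → Fin k) (w : Fin n) (γ : Edge n → ℤ)
    (u v : Fin n) : ℤ :=
  if z u ≠ z w ∧ z v ≠ z w then ent γ u v
  else if u = w ∧ z v ≠ z w then
    ∑ u' ∈ Finset.univ.filter (fun u' => z u' = z w), ent γ u' v
  else if v = w ∧ z u ≠ z w then
    ∑ v' ∈ Finset.univ.filter (fun v' => z v' = z w), ent γ u v'
  else 0

/-- The contraction `σ_w(γ) ∈ ℤ^P` of `γ` with respect to `w` and `z`. -/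
def contract {n k : ℕ} (z : Fin n → Fin k) (w : Fin n) (γ : Edge n → ℤ) :
    Edge n → ℤ :=
  fun e => contractEnt z w γ e.1.1 e.1.2


lemma ent_symm {n : ℕ} (γ : Edge n → ℤ) (u v : Fin n) : ent γ u v = ent γ v u := by
  unfold ent
  rcases lt_trichotomy u v with h | h | h
  · simp [h, h.asymm, h.ne, h.ne']
  · subst h; rfl
  · simp [h, h.asymm, h.ne, h.ne']

lemma key_sum {α : Type*} (s : Finset α) (f : α → ℤ) (h : ∑ a ∈ s, f a ≠ 0) :
    ∃ a ∈ s, 0 < f a * ∑ a ∈ s, f a := by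
  rcases h.lt_or_gt with hs | hs
  · obtain ⟨a, ha, hfa⟩ : ∃ a ∈ s, f a < 0 := by
      by_contra hc; push_neg at hc
      exact absurd (Finset.sum_nonneg fun a ha => hc a ha) (not_le.mpr hs)
    exact ⟨a, ha, mul_pos_of_neg_of_neg hfa hs⟩
  · obtain ⟨a, ha, hfa⟩ : ∃ a ∈ s, 0 < f a := by
      by_contra hc; push_neg at hc
      exact absurd (Finset.sum_nonpos fun a ha => hc a ha) (not_le.mpr hs)
    exact ⟨a, ha, mul_pos hfa hs⟩

lemma contract_aux {n k : ℕ} (z : Fin n → Fin k) (w : Fin n) (γ : Edge n → ℤ)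
    (u v : Fin n) (h : contractEnt z w γ u v ≠ 0) :
    ∃ u₀ v₀ : Fin n, z u₀ = z u ∧ z v₀ = z v ∧
      (u ≠ w → u₀ = u) ∧ (v ≠ w → v₀ = v) ∧
      ent γ u₀ v₀ ≠ 0 ∧ 0 < ent γ u₀ v₀ * contractEnt z w γ u v := by
  unfold contractEnt at h ⊢
  split_ifs at h ⊢ with h1 h2 h3
  · exact ⟨u, v, rfl, rfl, fun _ => rfl, fun _ => rfl, h, mul_self_pos.mpr h⟩
  · obtain ⟨u', hu', hpos⟩ := key_sum _ (fun u' => ent γ u' v) h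
    simp only [Finset.mem_filter, Finset.mem_univ, true_and] at hu'
    exact ⟨u', v, by rw [hu', h2.1], rfl, fun hu => absurd h2.1 hu, fun _ => rfl,
      left_ne_zero_of_mul hpos.ne', hpos⟩
  · obtain ⟨v', hv', hpos⟩ := key_sum _ (fun v' => ent γ u v') h
    simp only [Finset.mem_filter, Finset.mem_univ, true_and] at hv'
    exact ⟨u, v', rfl, by rw [hv', h3.1], fun _ => rfl, fun hv => absurd h3.1 hv,
      left_ne_zero_of_mul hpos.ne', hpos⟩
  · exact absurd rfl h

/-- Every nonzero entry of the contraction `σ_w(γ)` lifts to a nonzero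
entry of `γ` of the same sign, changing at most the endpoint equal to `w` and preserving
colors. -/
theorem contract_edge_lifts (n k : ℕ) (hn : 0 < n) (hk : 2 ≤ k)
    (z : Fin n → Fin k) (γ : Edge n → ℤ) (hγ : inKer z γ)
    (w u v : Fin n) (h : ent (contract z w γ) u v ≠ 0) :
    ∃ u₀ v₀ : Fin n, z u₀ = z u ∧ z v₀ = z v ∧
      (u ≠ w → u₀ = u) ∧ (v ≠ w → v₀ = v) ∧
      ent γ u₀ v₀ ≠ 0 ∧ 0 < ent γ u₀ v₀ * ent (contract z w γ) u v := by
  have huv : u ≠ v := by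
    intro heq; apply h; subst heq; unfold ent; simp [lt_irrefl]
  have hsplit : ent (contract z w γ) u v = contractEnt z w γ u v ∨
      (v < u ∧ ent (contract z w γ) u v = contractEnt z w γ v u) := by
    unfold ent
    rcases lt_trichotomy u v with hlt | heq | hlt
    · left; simp [hlt, contract]
    · exact absurd heq huv
    · right; exact ⟨hlt, by simp [hlt, hlt.asymm, contract]⟩
  rcases hsplit with he | ⟨hlt, he⟩
  · rw [he] at h ⊢
    exact contract_aux z w γ u v h
  · rw [he] at h ⊢
    obtain ⟨v₀, u₀, hz1, hz2, hv0, hu0, hne, hpos⟩ := contract_aux z w γ v u h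
    exact ⟨u₀, v₀, hz2, hz1, hu0, hv0, by rwa [ent_symm], by rwa [ent_symm]⟩
end

section
/- Let n be a positive integer, k ≥ 2, and z a non-decreasing k-coloring of {1,…,n}. Let γ ∈ ker_ℤ DC_{n,z}, let w ∈ {1,…,n}, let {u,v} ∈ P with σ_w(γ)_{uv} ≠ 0 and u ≠ w, and let {u',v'} ∈ P with σ_w(γ)_{u'v'} ≠ 0, u' ≠ w, v' ≠ w, such that {u,v} and {u',v'} are non-intersecting. Then there exists v₀ ∈ {1,…,n} with z(v₀) = z(v) and with v₀ = v whenever v ≠ w, such that γ_{uv₀} ≠ 0, γ_{uv₀} has the same sign as σ_w(γ)_{uv}, and {u,v₀} and {u',v'} are non-intersecting. -/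
open Finset

lemma ent_self {n : ℕ} (γ : Edge n → ℤ) (a : Fin n) : ent γ a a = 0 := by
  simp [ent]

lemma ent_comm {n : ℕ} (γ : Edge n → ℤ) (a b : Fin n) : ent γ a b = ent γ b a := by
  unfold ent
  rcases lt_trichotomy a b with h | h | h
  · rw [dif_pos h, dif_neg (asymm h), dif_pos h]
  · subst h; rfl
  · rw [dif_neg (asymm h), dif_pos h, dif_pos h]

lemma contractEnt_comm {n k : ℕ} (z : Fin n → Fin k) (w : Fin n) (γ : Edge n → ℤ)
    (a b : Fin n) : contractEnt z w γ a b = contractEnt z w γ b a := by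
  by_cases ha : z a = z w <;> by_cases hb : z b = z w <;>
    by_cases haw : a = w <;> by_cases hbw : b = w <;>
      simp_all [contractEnt, ent_comm]

lemma ent_contract {n k : ℕ} (z : Fin n → Fin k) (w : Fin n) (γ : Edge n → ℤ)
    {u v : Fin n} (h : u ≠ v) :
    ent (contract z w γ) u v = contractEnt z w γ u v := by
  unfold ent contract
  rcases lt_trichotomy u v with h' | h' | h'
  · rw [dif_pos h']
  · exact absurd h' h
  · rw [dif_neg (asymm h'), dif_pos h']; exact contractEnt_comm z w γ v u

lemma mirror_lt {n k : ℕ} {z : Fin n → Fin k} (hz : Monotone z) {a b c : Fin n}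
    (hab : z a = z b) (hc : z c ≠ z a) : c < a ↔ c < b := by
  constructor <;> intro h <;> by_contra h' <;> push_neg at h'
  · exact hc (le_antisymm (hz h.le) (hab ▸ hz h'))
  · exact hc (le_antisymm ((hab ▸ hz h.le : z c ≤ z a)) (hz h'))

/-- For a non-decreasing coloring, a nonzero entry `{u,v}` of `σ_w(γ)`
with `u ≠ w`, non-intersecting with another nonzero entry `{u',v'}` avoiding `w`, lifts to
a nonzero entry `{u,v₀}` of `γ` of the same sign that is still non-intersecting with
`{u',v'}`. -/
theorem contract_edge_lifts_nonintersecting (n k : ℕ) (hn : 0 < n) (hk : 2 ≤ k)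
    (z : Fin n → Fin k) (hz : Monotone z)
    (γ : Edge n → ℤ) (hγ : inKer z γ) (w u v u' v' : Fin n)
    (huv : ent (contract z w γ) u v ≠ 0) (hu : u ≠ w)
    (hu'v' : ent (contract z w γ) u' v' ≠ 0) (hu' : u' ≠ w) (hv' : v' ≠ w)
    (hni : NonIntersecting u v u' v') :
    ∃ v₀ : Fin n, z v₀ = z v ∧ (v ≠ w → v₀ = v) ∧ ent γ u v₀ ≠ 0 ∧
      0 < ent γ u v₀ * ent (contract z w γ) u v ∧
      NonIntersecting u v₀ u' v' := by
  have hne : u ≠ v := by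
    intro h; subst h; exact huv (ent_self _ _)
  have hne' : u' ≠ v' := by
    intro h; subst h; exact hu'v' (ent_self _ _)
  have heq := ent_contract z w γ hne
  have heq' := ent_contract z w γ hne'
  -- the other edge avoids the color class of w
  have h1' : z u' ≠ z w ∧ z v' ≠ z w := by
    by_contra hcon
    apply hu'v'
    rw [heq']
    unfold contractEnt
    rw [if_neg hcon, if_neg (fun hh => hu' hh.1), if_neg (fun hh => hv' hh.1)]
  by_cases h1 : z u ≠ z w ∧ z v ≠ z w
  · -- untouched entry
    have hval : ent (contract z w γ) u v = ent γ u v := by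
      rw [heq]; unfold contractEnt; rw [if_pos h1]
    refine ⟨v, rfl, fun _ => rfl, ?_, ?_, hni⟩
    · rw [hval] at huv; exact huv
    · rw [hval]; rw [hval] at huv; exact mul_self_pos.mpr huv
  · -- contracted entry: v = w
    have h3 : v = w ∧ z u ≠ z w := by
      by_contra h3
      apply huv
      rw [heq]
      unfold contractEnt
      rw [if_neg h1, if_neg (fun hh => hu hh.1), if_neg h3]
    obtain ⟨hvw, hzu⟩ := h3
    have hval : ent (contract z w γ) u v =
        ∑ v' ∈ Finset.univ.filter (fun x => z x = z w), ent γ u v' := by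
      rw [heq]; unfold contractEnt
      rw [if_neg h1, if_neg (fun hh => hu hh.1), if_pos ⟨hvw, hzu⟩]
    rw [hval] at huv
    -- pick a term of the sum with the right sign
    have hex : ∃ v₀, z v₀ = z w ∧ ent γ u v₀ ≠ 0 ∧
        0 < ent γ u v₀ * ∑ x ∈ Finset.univ.filter (fun x => z x = z w), ent γ u x := by
      rcases lt_or_gt_of_ne huv with hneg | hpos
      · have : ∃ x ∈ Finset.univ.filter (fun x => z x = z w), ent γ u x < 0 := by
          by_contra hc
          push_neg at hc
          exact absurd (Finset.sum_nonneg hc) (not_le.mpr hneg)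
        obtain ⟨x, hx, hxneg⟩ := this
        exact ⟨x, (Finset.mem_filter.mp hx).2, hxneg.ne,
          mul_pos_of_neg_of_neg hxneg hneg⟩
      · have : ∃ x ∈ Finset.univ.filter (fun x => z x = z w), 0 < ent γ u x := by
          by_contra hc
          push_neg at hc
          exact absurd (Finset.sum_nonpos hc) (not_le.mpr hpos)
        obtain ⟨x, hx, hxpos⟩ := this
        exact ⟨x, (Finset.mem_filter.mp hx).2, hxpos.ne',
          mul_pos hxpos hpos⟩
    obtain ⟨v₀, hzv₀, hne₀, hpos₀⟩ := hex
    refine ⟨v₀, by rw [hvw, hzv₀], fun h => absurd hvw h, hne₀, by rw [hval]; exact hpos₀, ?_⟩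
    -- non-intersecting transfer
    obtain ⟨d1, d2, _, _, hcr⟩ := hni
    rw [hvw] at hcr
    have m1 : (u : ℕ) < v₀ ↔ (u : ℕ) < w := by
      rw [← Fin.lt_def, ← Fin.lt_def]
      exact mirror_lt hz hzv₀ (fun h => hzu (hzv₀ ▸ h))
    have m2 : (u' : ℕ) < v₀ ↔ (u' : ℕ) < w := by
      rw [← Fin.lt_def, ← Fin.lt_def]
      exact mirror_lt hz hzv₀ (fun h => h1'.1 (hzv₀ ▸ h))
    have m3 : (v' : ℕ) < v₀ ↔ (v' : ℕ) < w := by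
      rw [← Fin.lt_def, ← Fin.lt_def]
      exact mirror_lt hz hzv₀ (fun h => h1'.2 (hzv₀ ▸ h))
    have nu : (u : ℕ) ≠ v₀ := fun h => hzu (Fin.val_injective h ▸ hzv₀)
    have nuw : (u : ℕ) ≠ w := fun h => hzu (Fin.val_injective h ▸ rfl)
    have nu' : (u' : ℕ) ≠ v₀ := fun h => h1'.1 (Fin.val_injective h ▸ hzv₀)
    have nu'w : (u' : ℕ) ≠ w := fun h => h1'.1 (Fin.val_injective h ▸ rfl)
    have nv' : (v' : ℕ) ≠ v₀ := fun h => h1'.2 (Fin.val_injective h ▸ hzv₀)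
    have nv'w : (v' : ℕ) ≠ w := fun h => h1'.2 (Fin.val_injective h ▸ rfl)
    refine ⟨d1, d2, fun h => h1'.1 (h ▸ hzv₀), fun h => h1'.2 (h ▸ hzv₀), ?_⟩
    simp only [Crossing, Fin.lt_def, min_def, max_def, Fin.le_def] at hcr ⊢
    split_ifs at hcr ⊢ <;> omega
end
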